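/- Let N be a GA1 number with Ω(N) ≥ 3 and let p be a prime factor of N. Then for any positive integer r ≤ v_p(N), we have p ≤ (r·log N)^{1/r} ≤ log N. -/

import Mathlib

/-!
Write `N = p * n` and `T = σ(p^(a-1))` with `a = v_p(N)`. By multiplicativity of `σ`,
`σ(N) * T = (1 + p * T) * σ(n)`, so the GA1 inequality `G(n) ≤ G(N)` reads
`p T (log log N - log log n) ≤ log log n`. Since `log log N - log log n ≥ log p / log N` and
`p T ≥ p^r`, this yields `p^r log p ≤ log log n * log N`, which forces `p^r ≤ r log N`: either
`p^r < log n`, or `log log n ≤ r log p`. The second inequality is `r x ≤ x^r` for `x = log N ≥ 2`.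
-/

open Real Filter

noncomputable def G (n : ℕ) : ℝ := (∑ d ∈ n.divisors, (d : ℝ)) / (n * Real.log (Real.log n))

def sigma' (n : ℕ) : ℕ := ∑ d ∈ n.divisors, d

def IsGA1 (N : ℕ) : Prop :=
  1 < N ∧ ¬ N.Prime ∧ ∀ p : ℕ, p.Prime → p ∣ N → G (N / p) ≤ G N

def IsGA2 (N : ℕ) : Prop :=
  1 < N ∧ ∀ a : ℕ, 0 < a → G (a * N) ≤ G N

def IsCA (N : ℕ) (ε : ℝ) : Prop :=
  0 < N ∧ ∀ n : ℕ, 1 < n → (sigma' n : ℝ) / (n : ℝ) ^ (1 + ε) ≤ (sigma' N : ℝ) / (N : ℝ) ^ (1 + ε)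

noncomputable def F (t : ℝ) (k : ℕ) : ℝ :=
  Real.log (1 + 1 / (∑ i ∈ Finset.Icc 1 k, t ^ i)) / Real.log t

noncomputable def chebTheta (n : ℕ) : ℝ :=
  ∑ p ∈ Finset.filter Nat.Prime (Finset.range (n + 1)), Real.log p

open scoped ArithmeticFunction.sigma ArithmeticFunction.Omega

namespace ArithmeticFunction

lemma two_pow_cardFactors_le {n : ℕ} (hn : n ≠ 0) : 2 ^ Ω n ≤ n := by
  rw [cardFactors_apply]
  calc 2 ^ n.primeFactorsList.length ≤ n.primeFactorsList.prod :=
        List.pow_card_le_prod _ _ fun x hx => (Nat.prime_of_mem_primeFactorsList hx).two_le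
    _ = n := Nat.prod_primeFactorsList hn

lemma sigma_one_prime_pow_succ {p : ℕ} (hp : p.Prime) (k : ℕ) :
    σ 1 (p ^ (k + 1)) = 1 + p * σ 1 (p ^ k) := by
  rw [sigma_one_apply_prime_pow hp, sigma_one_apply_prime_pow hp, Finset.sum_range_succ',
    Finset.mul_sum]
  simp only [pow_succ', pow_zero]
  ring

lemma pow_le_sigma_one_prime_pow {p : ℕ} (hp : p.Prime) (k : ℕ) : p ^ k ≤ σ 1 (p ^ k) := by
  rw [sigma_one_apply_prime_pow hp]
  exact Finset.single_le_sum (f := (p ^ ·)) (fun _ _ => Nat.zero_le _) (by simp)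

lemma sigma_one_prime_mul_mul_sigma_one_ordProj {p n : ℕ} (hp : p.Prime) (hn : n ≠ 0) :
    σ 1 (p * n) * σ 1 (p ^ n.factorization p) =
      (1 + p * σ 1 (p ^ n.factorization p)) * σ 1 n := by
  set k := n.factorization p
  have hcop (j : ℕ) : Nat.Coprime (p ^ j) (n / p ^ k) :=
    (Nat.coprime_ordCompl hp hn).pow_left j
  have hn_eq : p ^ k * (n / p ^ k) = n := Nat.ordProj_mul_ordCompl_eq_self n p
  have hpn_eq : p * n = p ^ (k + 1) * (n / p ^ k) := by rw [pow_succ', mul_assoc, hn_eq]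
  rw [hpn_eq, isMultiplicative_sigma.map_mul_of_coprime (hcop _), sigma_one_prime_pow_succ hp]
  conv_rhs => rw [← hn_eq, isMultiplicative_sigma.map_mul_of_coprime (hcop _)]
  ring

lemma sum_divisors_cast_eq_sigma_one (n : ℕ) : ∑ d ∈ n.divisors, (d : ℝ) = σ 1 n := by
  rw [sigma_one_apply]
  push_cast
  rfl

end ArithmeticFunction

namespace Real

lemma one_lt_log_of_three_le {x : ℝ} (hx : 3 ≤ x) : 1 < log x := by
  rw [lt_log_iff_exp_lt (by linarith)]
  linarith [exp_one_lt_three]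

lemma two_le_log_of_eight_le {x : ℝ} (hx : 8 ≤ x) : 2 ≤ log x :=
  calc (2 : ℝ) ≤ 3 * log 2 := by linarith [log_two_gt_d9]
    _ = log 8 := by rw [show (8 : ℝ) = 2 ^ 3 by norm_num, log_pow]; norm_num
    _ ≤ log x := log_le_log (by norm_num) hx

lemma log_div_log_mul_le_log_log_sub {x y : ℝ} (hx : 1 ≤ x) (hy : 1 < y) :
    log x / log (x * y) ≤ log (log (x * y)) - log (log y) := by
  have hlogx : 0 ≤ log x := log_nonneg hx
  have hlogy : 0 < log y := log_pos hy
  have hsplit : log (x * y) = log x + log y := log_mul (by positivity) (by positivity)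
  have hlogxy : 0 < log (x * y) := by linarith
  calc log x / log (x * y) = 1 - (log (x * y) / log y)⁻¹ := by
        rw [inv_div, hsplit]; field_simp; ring
    _ ≤ log (log (x * y) / log y) := one_sub_inv_le_log_of_pos (by positivity)
    _ = log (log (x * y)) - log (log y) := log_div hlogxy.ne' hlogy.ne'

lemma pow_le_mul_of_pow_mul_log_le {q ℓ L : ℝ} {r : ℕ} (hq : 1 < q) (hr : 1 ≤ r) (hℓ : 0 < ℓ)
    (hℓL : ℓ ≤ L) (h : q ^ r * log q ≤ log ℓ * L) : q ^ r ≤ r * L := by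
  have hlogq : 0 < log q := log_pos hq
  have hL : 0 < L := hℓ.trans_le hℓL
  by_cases hcase : log ℓ ≤ r * log q
  · refine le_of_mul_le_mul_right ?_ hlogq
    calc q ^ r * log q ≤ log ℓ * L := h
      _ ≤ r * log q * L := mul_le_mul_of_nonneg_right hcase hL.le
      _ = r * L * log q := by ring
  · have hqℓ : q ^ r < ℓ := by
      rw [← log_lt_log_iff (by positivity) hℓ, log_pow]
      exact not_le.mp hcase
    have hr' : (1 : ℝ) ≤ r := by exact_mod_cast hr
    calc q ^ r ≤ L := hqℓ.le.trans hℓL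
      _ ≤ r * L := le_mul_of_one_le_left hL.le hr'

lemma natCast_mul_le_pow {x : ℝ} (hx : 2 ≤ x) (r : ℕ) : r * x ≤ x ^ r := by
  cases r with
  | zero => simp
  | succ k =>
    have hk : (k + 1 : ℝ) ≤ 2 ^ k := by exact_mod_cast Nat.lt_two_pow_self
    calc ((k + 1 : ℕ) : ℝ) * x ≤ 2 ^ k * x := by push_cast; gcongr
      _ ≤ x ^ k * x := by gcongr
      _ = x ^ (k + 1) := (pow_succ x k).symm

end Real

section GA1

open ArithmeticFunction (sigma_pos sum_divisors_cast_eq_sigma_one pow_le_sigma_one_prime_pow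
  sigma_one_prime_mul_mul_sigma_one_ordProj)

lemma mul_sigma_mul_log_log_sub_le_of_G_le {p n : ℕ} (hp : p.Prime) (hn : 3 ≤ n)
    (hG : G n ≤ G (p * n)) :
    p * σ 1 (p ^ n.factorization p) * (log (log (p * n : ℕ)) - log (log n)) ≤ log (log n) := by
  have hid : (σ 1 (p * n) : ℝ) * σ 1 (p ^ n.factorization p) =
      (1 + p * σ 1 (p ^ n.factorization p)) * σ 1 n := by
    exact_mod_cast sigma_one_prime_mul_mul_sigma_one_ordProj hp (by omega : n ≠ 0)
  have hT : (0 : ℝ) < σ 1 (p ^ n.factorization p) := by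
    exact_mod_cast sigma_pos 1 _ (pow_ne_zero _ hp.ne_zero)
  set T : ℝ := ↑(σ 1 (p ^ n.factorization p))
  have hpn : 3 ≤ p * n := hn.trans (Nat.le_mul_of_pos_left n hp.pos)
  have hLn : 0 < log (log n) := log_pos (one_lt_log_of_three_le (by exact_mod_cast hn))
  have hLpn : 0 < log (log (p * n : ℕ)) :=
    log_pos (one_lt_log_of_three_le (by exact_mod_cast hpn))
  have hS : (0 : ℝ) < σ 1 n := by exact_mod_cast sigma_pos 1 n (by omega)
  have hn0 : (0 : ℝ) < n := by exact_mod_cast (by omega : 0 < n)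
  have hpn0 : (0 : ℝ) < (p * n : ℕ) := by exact_mod_cast (by omega : 0 < p * n)
  unfold G at hG
  rw [sum_divisors_cast_eq_sigma_one, sum_divisors_cast_eq_sigma_one,
    div_le_div_iff₀ (by positivity) (by positivity)] at hG
  have key : p * T * log (log (p * n : ℕ)) * (σ 1 n * n) ≤
      (1 + p * T) * log (log n) * (σ 1 n * n) :=
    calc p * T * log (log (p * n : ℕ)) * (σ 1 n * n)
        = T * (σ 1 n * ((p * n : ℕ) * log (log (p * n : ℕ)))) := by push_cast; ring
      _ ≤ T * (σ 1 (p * n) * (n * log (log n))) := mul_le_mul_of_nonneg_left hG hT.le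
      _ = (1 + p * T) * log (log n) * (σ 1 n * n) := by
          rw [← mul_assoc, mul_comm T, ← mul_assoc, hid]; ring
  linarith [le_of_mul_le_mul_right key (by positivity)]

lemma pow_mul_log_le_of_G_le {p n r : ℕ} (hp : p.Prime) (hn : 3 ≤ n) (hG : G n ≤ G (p * n))
    (hr : r ≤ n.factorization p + 1) :
    (p : ℝ) ^ r * log p ≤ log (log n) * log (p * n : ℕ) := by
  have hpowT : (p : ℝ) ^ n.factorization p ≤ σ 1 (p ^ n.factorization p) := by
    exact_mod_cast pow_le_sigma_one_prime_pow hp _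
  set T : ℝ := ↑(σ 1 (p ^ n.factorization p))
  have hp1 : (1 : ℝ) < p := by exact_mod_cast hp.one_lt
  have hn1 : (1 : ℝ) < n := by exact_mod_cast (by omega : 1 < n)
  have hlogpn : 0 < log (p * n : ℕ) := by push_cast; exact log_pos (by nlinarith)
  have hpT : (p : ℝ) ^ r ≤ p * T :=
    calc (p : ℝ) ^ r ≤ p ^ (n.factorization p + 1) := pow_le_pow_right₀ hp1.le hr
      _ = p * p ^ n.factorization p := pow_succ' _ _
      _ ≤ p * T := by gcongr
  have hratio : log p / log (p * n : ℕ) ≤ log (log (p * n : ℕ)) - log (log n) := by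
    push_cast; exact log_div_log_mul_le_log_log_sub hp1.le hn1
  calc (p : ℝ) ^ r * log p ≤ p * T * log p := by gcongr
    _ = p * T * (log p / log (p * n : ℕ)) * log (p * n : ℕ) := by field_simp
    _ ≤ p * T * (log (log (p * n : ℕ)) - log (log n)) * log (p * n : ℕ) := by gcongr
    _ ≤ log (log n) * log (p * n : ℕ) := by
        gcongr; exact mul_sigma_mul_log_log_sub_le_of_G_le hp hn hG

end GA1

theorem stmt10 (N : ℕ) (hGA1 : IsGA1 N) (hΩ : 3 ≤ (ArithmeticFunction.cardFactors N))
    (p : ℕ) (hp : p.Prime) (hpN : p ∣ N)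
    (r : ℕ) (hr : 1 ≤ r) (hrv : r ≤ N.factorization p) :
    (p : ℝ) ≤ (r * Real.log N) ^ ((1 : ℝ) / r) ∧
      (r * Real.log N) ^ ((1 : ℝ) / r) ≤ Real.log N := by
  obtain ⟨n, rfl⟩ := hpN
  have hn0 : n ≠ 0 := by rintro rfl; simp at hΩ
  have hΩn : 2 ≤ Ω n := by
    rw [ArithmeticFunction.cardFactors_mul hp.ne_zero hn0,
      ArithmeticFunction.cardFactors_apply_prime hp] at hΩ
    omega
  have hn : 4 ≤ n :=
    (Nat.pow_le_pow_right two_pos hΩn).trans (ArithmeticFunction.two_pow_cardFactors_le hn0)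
  have hN : 8 ≤ p * n := (Nat.pow_le_pow_right two_pos hΩ).trans
    (ArithmeticFunction.two_pow_cardFactors_le (mul_ne_zero hp.ne_zero hn0))
  have hrn : r ≤ n.factorization p + 1 := by
    rwa [Nat.factorization_mul hp.ne_zero hn0, Finsupp.add_apply, hp.factorization_self,
      add_comm] at hrv
  have hG : G n ≤ G (p * n) := by
    simpa only [Nat.mul_div_cancel_left n hp.pos] using hGA1.2.2 p hp (dvd_mul_right p n)
  have hlogN : 2 ≤ log (p * n : ℕ) := two_le_log_of_eight_le (by exact_mod_cast hN)
  have hpow : (p : ℝ) ^ r ≤ r * log (p * n : ℕ) :=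
    pow_le_mul_of_pow_mul_log_le (by exact_mod_cast hp.one_lt) hr
      (log_pos (by exact_mod_cast (by omega : 1 < n)))
      (log_le_log (by positivity) (by exact_mod_cast Nat.le_mul_of_pos_left n hp.pos))
      (pow_mul_log_le_of_G_le hp (by omega) hG hrn)
  have hr0 : (0 : ℝ) < r := by exact_mod_cast hr
  rw [one_div]
  constructor
  · rw [le_rpow_inv_iff_of_pos (by positivity) (by positivity) hr0, rpow_natCast]
    exact hpow
  · rw [rpow_inv_le_iff_of_pos (by positivity) (by positivity) hr0, rpow_natCast]
    exact natCast_mul_le_pow hlogN r
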